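/- arXiv:1910.05817 — 4 statements merged into one kernel-verified Lean document; each statement's English description precedes it below -/
import Mathlib

section
/- The set G_ρ(X) = {x ∈ X : 1 + ρ(x) > 0} with the operation u ∘_ρ v = u + v + ρ(u)·v forms a group, with identity 0 and inverse of u given by -u/(1+ρ(u)). -/
/-!
The map `x ↦ 1 + ρ x` turns `u ∘ v = u + v + ρ(u) v` into multiplication of scalars:
`1 + ρ(u ∘ v) = (1 + ρ u)(1 + ρ v)`. Hence the half-line `1 + ρ > 0` is closed under `∘`,
and `-u / (1 + ρ u)` has `1 + ρ = (1 + ρ u)⁻¹ > 0`. Associativity and the unit and inverse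
laws are identities in the module `X`.
-/

namespace Popa

section Field

variable {K X : Type*} [Field K] [AddCommGroup X] [Module K X] (ρ : X →ₗ[K] K)

def op (u v : X) : X := u + v + ρ u • v

def inv (u : X) : X := (1 + ρ u)⁻¹ • -u

theorem one_add_op (u v : X) : 1 + ρ (op ρ u v) = (1 + ρ u) * (1 + ρ v) := by
  simp only [op, map_add, map_smul, smul_eq_mul]
  ring

theorem op_assoc (u v w : X) : op ρ (op ρ u v) w = op ρ u (op ρ v w) := by
  simp only [op, map_add, map_smul, smul_eq_mul, smul_add, smul_smul, add_smul]
  module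

theorem zero_op (u : X) : op ρ 0 u = u := by
  simp [op]

theorem op_zero (u : X) : op ρ u 0 = u := by
  simp [op]

section Inverse

variable {ρ} {u : X} (hu : 1 + ρ u ≠ 0)
include hu

theorem one_add_inv : 1 + ρ (inv ρ u) = (1 + ρ u)⁻¹ := by
  simp only [inv, map_smul, map_neg, smul_eq_mul]
  field_simp
  ring

theorem op_inv : op ρ u (inv ρ u) = 0 := by
  simp only [op, inv]
  linear_combination (norm := module) -(mul_inv_cancel₀ hu) • u

theorem inv_op : op ρ (inv ρ u) u = 0 := by
  have hρ : ρ (inv ρ u) = (1 + ρ u)⁻¹ - 1 := by linear_combination one_add_inv hu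
  rw [op, hρ, inv]
  module

end Inverse

end Field

section LinearOrderedField

variable {K X : Type*} [Field K] [LinearOrder K] [IsStrictOrderedRing K] [AddCommGroup X]
  [Module K X] {ρ : X →ₗ[K] K} {u v : X}

theorem one_add_op_pos (hu : 0 < 1 + ρ u) (hv : 0 < 1 + ρ v) : 0 < 1 + ρ (op ρ u v) := by
  rw [one_add_op]
  exact mul_pos hu hv

theorem one_add_inv_pos (hu : 0 < 1 + ρ u) : 0 < 1 + ρ (inv ρ u) := by
  rw [one_add_inv hu.ne']
  exact inv_pos.2 hu

end LinearOrderedField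

end Popa

open Popa in
theorem popa_group_structure
    (X : Type*) [AddCommGroup X] [Module ℝ X] (ρ : X →ₗ[ℝ] ℝ) :
    (∀ u ∈ {x : X | 1 + ρ x > 0}, ∀ v ∈ {x : X | 1 + ρ x > 0},
        u + v + ρ u • v ∈ {x : X | 1 + ρ x > 0}) ∧
    (∀ u v w : X,
        (u + v + ρ u • v) + w + ρ (u + v + ρ u • v) • w
          = u + (v + w + ρ v • w) + ρ u • (v + w + ρ v • w)) ∧
    ((0 : X) ∈ {x : X | 1 + ρ x > 0}) ∧
    (∀ u : X, (0 : X) + u + ρ (0 : X) • u = u ∧ u + 0 + ρ u • (0 : X) = u) ∧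
    (∀ u ∈ {x : X | 1 + ρ x > 0},
        ((1 + ρ u)⁻¹ • (-u)) ∈ {x : X | 1 + ρ x > 0} ∧
        u + ((1 + ρ u)⁻¹ • (-u)) + ρ u • ((1 + ρ u)⁻¹ • (-u)) = 0 ∧
        ((1 + ρ u)⁻¹ • (-u)) + u + ρ ((1 + ρ u)⁻¹ • (-u)) • u = 0) :=
  ⟨fun _ hu _ hv => one_add_op_pos (ρ := ρ) hu hv,
    op_assoc ρ,
    by simp,
    fun u => ⟨zero_op ρ u, op_zero ρ u⟩,
    fun _ hu => ⟨one_add_inv_pos (ρ := ρ) hu, op_inv hu.ne', inv_op hu.ne'⟩⟩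
end

section
/- If the pair (K, g) satisfies the Goldie functional equation K(u ∘_ρ v) = K(u) + g(u)·K(v) for all u, v ∈ G_ρ(X), and K is not identically zero, then g is ρ-multiplicative: g(u ∘_ρ v) = g(u)·g(v) for all u, v ∈ G_ρ(X). -/
/-!
Since `u ∘_ρ v = u + v + ρ(u) v` is associative and `1 + ρ(u ∘_ρ v) = (1 + ρ u)(1 + ρ v)`, the set
`G_ρ(X)` is closed under `∘_ρ`, and `K((u ∘_ρ v) ∘_ρ w) = K(u ∘_ρ (v ∘_ρ w))` may be expanded by the
Goldie equation in two ways. Comparing the expansions leaves `g(u ∘_ρ v) K(w) = g(u) g(v) K(w)`,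
and a `w` with `K(w) ≠ 0` cancels.
-/

section Circle

variable {R X : Type*} [CommRing R] [AddCommGroup X] [Module R X] (ρ : X →ₗ[R] R)

def circ (u v : X) : X := u + v + ρ u • v

theorem one_add_map_circ (u v : X) : 1 + ρ (circ ρ u v) = (1 + ρ u) * (1 + ρ v) := by
  simp only [circ, map_add, map_smul, smul_eq_mul]
  ring

theorem circ_assoc (u v w : X) : circ ρ (circ ρ u v) w = circ ρ u (circ ρ v w) := by
  simp only [circ, map_add, map_smul, smul_eq_mul, smul_add, smul_smul]
  module

theorem one_add_map_circ_pos [LinearOrder R] [IsStrictOrderedRing R] {u v : X}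
    (hu : 0 < 1 + ρ u) (hv : 0 < 1 + ρ v) : 0 < 1 + ρ (circ ρ u v) := by
  rw [one_add_map_circ]
  exact mul_pos hu hv

theorem goldie_smul_eq_mul_smul {Y : Type*} [AddCommGroup Y] [Module R Y] {K : X → Y}
    {g : X → R} {G : Set X} (hG : ∀ u ∈ G, ∀ v ∈ G, circ ρ u v ∈ G)
    (hGFE : ∀ u ∈ G, ∀ v ∈ G, K (circ ρ u v) = K u + g u • K v)
    {u v w : X} (hu : u ∈ G) (hv : v ∈ G) (hw : w ∈ G) :
    g (circ ρ u v) • K w = (g u * g v) • K w := by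
  have h := congrArg K (circ_assoc ρ u v w)
  rw [hGFE _ (hG u hu v hv) w hw, hGFE u hu v hv, hGFE u hu _ (hG v hv w hw), hGFE v hv w hw]
    at h
  rw [mul_smul]
  linear_combination (norm := module) h

end Circle

theorem goldie_auxiliary_multiplicative_general
    (X Y : Type*) [AddCommGroup X] [Module ℝ X] [AddCommGroup Y] [Module ℝ Y]
    (ρ : X →ₗ[ℝ] ℝ) (K : X → Y) (g : X → ℝ)
    (hKne : ∃ x, 1 + ρ x > 0 ∧ K x ≠ 0)
    (hGFE : ∀ u v, 1 + ρ u > 0 → 1 + ρ v > 0 →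
        K (u + v + ρ u • v) = K u + g u • K v) :
    ∀ u v, 1 + ρ u > 0 → 1 + ρ v > 0 →
        g (u + v + ρ u • v) = g u * g v := by
  intro u v hu hv
  obtain ⟨w, hw, hKw⟩ := hKne
  let G : Set X := {x | 0 < 1 + ρ x}
  have hG : ∀ u ∈ G, ∀ v ∈ G, circ ρ u v ∈ G := fun _ hu _ hv => one_add_map_circ_pos ρ hu hv
  exact smul_left_injective ℝ hKw
    (goldie_smul_eq_mul_smul ρ hG (fun u hu v hv => hGFE u v hu hv) hu hv hw)

theorem goldie_auxiliary_multiplicative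
    (X Y : Type*) [AddCommGroup X] [Module ℝ X] [AddCommGroup Y] [Module ℝ Y]
    (ρ : X →ₗ[ℝ] ℝ) (K : X → Y) (g : X → ℝ)
    (hgpos : ∀ x, 1 + ρ x > 0 → g x > 0)
    (hKne : ∃ x, 1 + ρ x > 0 ∧ K x ≠ 0)
    (hGFE : ∀ u v, 1 + ρ u > 0 → 1 + ρ v > 0 →
        K (u + v + ρ u • v) = K u + g u • K v) :
    ∀ u v, 1 + ρ u > 0 → 1 + ρ v > 0 →
        g (u + v + ρ u • v) = g u * g v :=
  goldie_auxiliary_multiplicative_general X Y ρ K g hKne hGFE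
end

section
/- For real parameters γ ≠ 0 and ρ > 0, the Popa link function λ(t) := [(1+tρ)^{γ/ρ} − 1]/[(1+ρ)^{γ/ρ} − 1] satisfies λ(s ∘_ρ t) = λ(s) ∘_σ λ(t) for σ := (1+ρ)^{γ/ρ} − 1, where a ∘_σ b := a + b + σab. -/
/-! The substitution `t ↦ 1 + tρ` turns `∘_ρ` into multiplication, `x ↦ x ^ (γ/ρ)` is
multiplicative on nonnegative reals, and `x ↦ (x - 1)/σ` turns multiplication into `∘_σ`;
the Popa link function is the composite of these three maps. -/

theorem mul_sub_one_div {K : Type*} [Field K] (a b c : K) :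
    (a * b - 1) / c = (a - 1) / c + (b - 1) / c + c * ((a - 1) / c * ((b - 1) / c)) := by
  rcases eq_or_ne c 0 with rfl | hc
  · simp
  · field_simp
    ring

theorem rpow_one_add_popa_mul {s t ρ : ℝ} (hs : 0 ≤ 1 + s * ρ) (ht : 0 ≤ 1 + t * ρ) (e : ℝ) :
    (1 + (s + t + ρ * s * t) * ρ) ^ e = (1 + s * ρ) ^ e * (1 + t * ρ) ^ e := by
  rw [← Real.mul_rpow hs ht]
  ring_nf

theorem popa_link_homomorphism_general (γ ρ : ℝ) :
    ∀ s t : ℝ, 1 + ρ * s > 0 → 1 + ρ * t > 0 →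
      (fun x : ℝ => ((1 + x * ρ) ^ (γ / ρ) - 1) / ((1 + ρ) ^ (γ / ρ) - 1))
          (s + t + ρ * s * t)
        = (fun x : ℝ => ((1 + x * ρ) ^ (γ / ρ) - 1) / ((1 + ρ) ^ (γ / ρ) - 1)) s
          + (fun x : ℝ => ((1 + x * ρ) ^ (γ / ρ) - 1) / ((1 + ρ) ^ (γ / ρ) - 1)) t
          + ((1 + ρ) ^ (γ / ρ) - 1) *
            ((fun x : ℝ => ((1 + x * ρ) ^ (γ / ρ) - 1) / ((1 + ρ) ^ (γ / ρ) - 1)) s *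
             (fun x : ℝ => ((1 + x * ρ) ^ (γ / ρ) - 1) / ((1 + ρ) ^ (γ / ρ) - 1)) t) := by
  intro s t hs ht
  beta_reduce
  rw [rpow_one_add_popa_mul (by linarith) (by linarith)]
  exact mul_sub_one_div _ _ _

theorem popa_link_homomorphism (γ ρ : ℝ) (hγ : γ ≠ 0) (hρ : ρ > 0) :
    ∀ s t : ℝ, 1 + ρ * s > 0 → 1 + ρ * t > 0 →
      (fun x : ℝ => ((1 + x * ρ) ^ (γ / ρ) - 1) / ((1 + ρ) ^ (γ / ρ) - 1))
          (s + t + ρ * s * t)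
        = (fun x : ℝ => ((1 + x * ρ) ^ (γ / ρ) - 1) / ((1 + ρ) ^ (γ / ρ) - 1)) s
          + (fun x : ℝ => ((1 + x * ρ) ^ (γ / ρ) - 1) / ((1 + ρ) ^ (γ / ρ) - 1)) t
          + ((1 + ρ) ^ (γ / ρ) - 1) *
            ((fun x : ℝ => ((1 + x * ρ) ^ (γ / ρ) - 1) / ((1 + ρ) ^ (γ / ρ) - 1)) s *
             (fun x : ℝ => ((1 + x * ρ) ^ (γ / ρ) - 1) / ((1 + ρ) ^ (γ / ρ) - 1)) t) :=
  popa_link_homomorphism_general γ ρ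
end

section
/- Suppose K : ℝ → ℝ and differentiable g, h : ℝ → ℝ with g(0) = h(0) = 1 satisfy K(a + h(a)b) = K(a) + g(a)K(b) for all a, b, where K(t) = λ(t)·K(1) with K(1) ≠ 0 and λ(t) = λ(t; γ, ρ) the Popa link function with γ = g'(0) ≠ 0, ρ = h'(0) = 0. Then h ≡ 1 and g(s) = e^{γs} for all s. -/
/-!
Writing the radial form as `K t = c (e^{γt} - 1)` with `c ≠ 0`, the equation at a fixed `a`
becomes `e^{γa} (e^{γ h(a) b} - 1) = g(a) (e^{γb} - 1)` for all `b`. Comparing `b = 1` with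
`b = 2` forces either `g(a) = 0`, or `h(a) = 1` and `g(a) = e^{γa}`. As `e^{γa}` never vanishes,
the zero set of the continuous `g` is clopen, and it misses `0` because `g(0) = 1`; so the
second alternative holds everywhere.
-/

open Real

theorem forall_mul_exp_sub_one_eq_of_map_add_mul {K : ℝ → ℝ} {γ c : ℝ} (hc : c ≠ 0)
    (hK : ∀ t, K t = (exp (γ * t) - 1) * c) {a u v : ℝ}
    (hKuv : ∀ b, K (a + u * b) = K a + v * K b) (b : ℝ) :
    exp (γ * a) * (exp (γ * (u * b)) - 1) = v * (exp (γ * b) - 1) := by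
  have hb := hKuv b
  rw [hK, hK, hK, mul_add, exp_add] at hb
  exact mul_right_cancel₀ hc (by linear_combination hb)

theorem eq_zero_or_eq_of_forall_mul_exp_sub_one_eq {γ A u v : ℝ} (hγ : γ ≠ 0) (hA : A ≠ 0)
    (h : ∀ b, A * (exp (γ * (u * b)) - 1) = v * (exp (γ * b) - 1)) :
    v = 0 ∨ (u = 1 ∧ v = A) := by
  have h1 := h 1
  have h2 := h 2
  simp only [mul_one] at h1
  rw [show γ * (u * 2) = γ * u + γ * u by ring, show γ * 2 = γ + γ by ring, exp_add, exp_add]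
    at h2
  have hE : exp γ - 1 ≠ 0 := sub_ne_zero.2 fun h => hγ (exp_eq_one_iff γ |>.1 h)
  have hroots : A * ((exp (γ * u) - 1) * (exp (γ * u) - exp γ)) = 0 := by
    linear_combination h2 - (exp γ + 1) * h1
  rcases mul_eq_zero.1 ((mul_eq_zero.1 hroots).resolve_left hA) with hX | hX
  · left
    have hv : v * (exp γ - 1) = 0 := by linear_combination -h1 + A * hX
    exact (mul_eq_zero.1 hv).resolve_right hE
  · right
    have hγu : γ * u = γ * 1 := by rw [mul_one]; exact exp_injective (sub_eq_zero.1 hX)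
    have hv : v * (exp γ - 1) = A * (exp γ - 1) := by linear_combination -h1 + A * hX
    exact ⟨mul_left_cancel₀ hγ hγu, mul_right_cancel₀ hE hv⟩

theorem eq_of_forall_eq_zero_or_eq {X M : Type*} [TopologicalSpace X] [PreconnectedSpace X]
    [TopologicalSpace M] [T2Space M] [Zero M] {f g : X → M} (hf : Continuous f)
    (hg : Continuous g) (hg0 : ∀ x, g x ≠ 0) (hfg : ∀ x, f x = 0 ∨ f x = g x) {x₀ : X}
    (hx₀ : f x₀ ≠ 0) (x : X) : f x = g x := by
  have hcompl : {x | f x = g x}ᶜ = {x | f x = 0} := by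
    ext x
    show f x ≠ g x ↔ f x = 0
    exact ⟨(hfg x).resolve_right, fun h h' => hg0 x (h' ▸ h)⟩
  have hclopen : IsClopen {x | f x = g x} :=
    ⟨isClosed_eq hf hg, isClosed_compl_iff.1 (hcompl ▸ isClosed_eq hf continuous_const)⟩
  have hx : x ∈ {x | f x = g x} := by
    rw [hclopen.eq_univ ⟨x₀, (hfg x₀).resolve_left hx₀⟩]
    trivial
  exact hx

theorem tetrachotomy_case_ii_general
    (K g h : ℝ → ℝ)
    (hgdiff : Differentiable ℝ g)
    (hg0 : g 0 = 1)
    (hγ : deriv g 0 ≠ 0)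
    (hK1 : K 1 ≠ 0)
    (hrad : ∀ t : ℝ,
        K t = (Real.exp (deriv g 0 * t) - 1) / (Real.exp (deriv g 0) - 1) * K 1)
    (hGGE : ∀ a b : ℝ, K (a + h a * b) = K a + g a * K b) :
    ∀ s : ℝ, h s = 1 ∧ g s = Real.exp (deriv g 0 * s) := by
  have hE : exp (deriv g 0) - 1 ≠ 0 := sub_ne_zero.2 fun h => hγ (exp_eq_one_iff _ |>.1 h)
  have hK : ∀ t, K t = (exp (deriv g 0 * t) - 1) * (K 1 / (exp (deriv g 0) - 1)) := fun t => by
    rw [hrad t]; ring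
  have hdich : ∀ a, g a = 0 ∨ (h a = 1 ∧ g a = exp (deriv g 0 * a)) := fun a =>
    eq_zero_or_eq_of_forall_mul_exp_sub_one_eq hγ (exp_ne_zero _)
      (forall_mul_exp_sub_one_eq_of_map_add_mul (div_ne_zero hK1 hE) hK (hGGE a))
  have hg : ∀ a, g a = exp (deriv g 0 * a) :=
    eq_of_forall_eq_zero_or_eq hgdiff.continuous (by fun_prop) (fun _ => exp_ne_zero _)
      (fun a => (hdich a).imp_right And.right) (x₀ := 0) (by rw [hg0]; exact one_ne_zero)
  exact fun s => (hdich s).resolve_left ((hg s).trans_ne (exp_ne_zero _))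

theorem tetrachotomy_case_ii
    (K g h : ℝ → ℝ)
    (hgdiff : Differentiable ℝ g) (hhdiff : Differentiable ℝ h)
    (hg0 : g 0 = 1) (hh0 : h 0 = 1)
    (hγ : deriv g 0 ≠ 0) (hρ : deriv h 0 = 0)
    (hK1 : K 1 ≠ 0)
    (hrad : ∀ t : ℝ,
        K t = (Real.exp (deriv g 0 * t) - 1) / (Real.exp (deriv g 0) - 1) * K 1)
    (hGGE : ∀ a b : ℝ, K (a + h a * b) = K a + g a * K b) :
    ∀ s : ℝ, h s = 1 ∧ g s = Real.exp (deriv g 0 * s) :=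
  tetrachotomy_case_ii_general K g h hgdiff hg0 hγ hK1 hrad hGGE
end
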